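/- arXiv:1911.02424 — 5 statements merged into one kernel-verified Lean document; each statement's English description precedes it below -/
import Mathlib

section
/- Let A ∈ ℝ^{p×p} and C ∈ ℝ^{q×q} be symmetric matrices and B ∈ ℝ^{q×p} be such that the block matrix P = [[A, Bᵀ],[B, C]] ∈ ℝ^{(p+q)×(p+q)} is positive semidefinite. Let Γ ∈ ℝ^{p×p} be symmetric positive definite and h > 0. Then the matrix P + blockdiag(h^{−1}Γ, h^{−1}I_q) is invertible and [B C] (P + blockdiag(h^{−1}Γ, h^{−1}I_q))^{−1} [B C]ᵀ ⪰ C (C + h^{−1}I_q)^{−1} C in the Loewner order, where [B C] ∈ ℝ^{q×(p+q)} is the horizontal concatenation of B and C. -/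
open scoped BigOperators
open Matrix

noncomputable section

/-- Euclidean norm of a vector `v : Fin d → ℝ`. -/
def evNorm {d : ℕ} (v : Fin d → ℝ) : ℝ := Real.sqrt (∑ i, v i ^ 2)

/-- Spectral (ℓ²-operator) norm of a real matrix. -/
def spNorm {p q : ℕ} (A : Matrix (Fin p) (Fin q) ℝ) : ℝ :=
  sSup {r : ℝ | ∃ v : Fin q → ℝ, evNorm v ≤ 1 ∧ r = evNorm (A.mulVec v)}

/-- Smallest eigenvalue (Rayleigh quotient infimum) of a square matrix. -/
def lambdaMin {d : ℕ} (A : Matrix (Fin d) (Fin d) ℝ) : ℝ :=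
  sInf {r : ℝ | ∃ v : Fin d → ℝ, evNorm v = 1 ∧ r = v ⬝ᵥ A.mulVec v}

/-- Loewner order `A ⪯ B` : `B - A` is positive semidefinite. -/
def loewnerLE {d : ℕ} (A B : Matrix (Fin d) (Fin d) ℝ) : Prop := (B - A).PosSemidef

/-- Sample mean of an ensemble of `K` vectors. -/
def sMean {K d : ℕ} (u : Fin K → Fin d → ℝ) : Fin d → ℝ := (K : ℝ)⁻¹ • ∑ i, u i

/-- Sample (cross-)covariance of two ensembles. -/
def sCov {K p q : ℕ} (a : Fin K → Fin p → ℝ) (b : Fin K → Fin q → ℝ) :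
    Matrix (Fin p) (Fin q) ℝ :=
  (K : ℝ)⁻¹ • ∑ i, Matrix.of (fun j l => (a i j - sMean a j) * (b i l - sMean b l))

/-- Jacobian matrix of a map between finite-dimensional coordinate spaces. -/
def jac {a b : ℕ} (H : (Fin a → ℝ) → Fin b → ℝ) (x : Fin a → ℝ) :
    Matrix (Fin b) (Fin a) ℝ :=
  Matrix.of fun i j => fderiv ℝ H x (Pi.single j 1) i

/-- Gradient (coordinate) vector of a scalar function. -/
def gradVec {d : ℕ} (f : (Fin d → ℝ) → ℝ) (x : Fin d → ℝ) : Fin d → ℝ :=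
  fun j => fderiv ℝ f x (Pi.single j 1)

/-- The augmented (Tikhonov) observation map `u ↦ (G u, u)`. -/
def aug {du dy : ℕ} (G : (Fin du → ℝ) → Fin dy → ℝ) (u : Fin du → ℝ) :
    Fin (dy + du) → ℝ :=
  Fin.append (G u) u

/-- The augmented noise covariance `Γ₊ = blockdiag(Γ, I)`. -/
def gammaPlus {dy du : ℕ} (Γ : Matrix (Fin dy) (Fin dy) ℝ) :
    Matrix (Fin (dy + du)) (Fin (dy + du)) ℝ :=
  Matrix.reindex finSumFinEquiv finSumFinEquiv (Matrix.fromBlocks Γ 0 0 1)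

/-- `C^{uu}`: sample covariance of the ensemble. -/
def Cuu {K du : ℕ} (u : Fin K → Fin du → ℝ) : Matrix (Fin du) (Fin du) ℝ := sCov u u

/-- `C^{up}`: sample cross-covariance of the ensemble and its (augmented) observations. -/
def Cup {K du dy : ℕ} (G : (Fin du → ℝ) → Fin dy → ℝ) (u : Fin K → Fin du → ℝ) :
    Matrix (Fin du) (Fin (dy + du)) ℝ :=
  sCov u (fun i => aug G (u i))

/-- `C^{pp}`: sample covariance of the (augmented) observations. -/
def Cpp {K du dy : ℕ} (G : (Fin du → ℝ) → Fin dy → ℝ) (u : Fin K → Fin du → ℝ) :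
    Matrix (Fin (dy + du)) (Fin (dy + du)) ℝ :=
  sCov (fun i => aug G (u i)) (fun i => aug G (u i))

/-!
Write `M = P + D` with `D = h⁻¹ blockdiag(Γ, I)` and let `E = [0; I]`, so that `[B C] = Eᵀ P`,
`C = Eᵀ P E`, `C + h⁻¹ I = Eᵀ M E` and `D E = h⁻¹ E`. Expanding `P M⁻¹ P = (M - D) M⁻¹ (M - D)`
and `C (Eᵀ M E)⁻¹ C` in the same way, the two sides differ by `h⁻² (Eᵀ M⁻¹ E - (Eᵀ M E)⁻¹)`.
This is positive semidefinite because compressing the positive semidefinite block matrix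
`[[M, I], [I, M⁻¹]]` by `blockdiag(E, E)` gives `[[Eᵀ M E, I], [I, Eᵀ M⁻¹ E]]`, whose Schur
complement it is.
-/

open scoped ComplexOrder

namespace Matrix

theorem mulVec_injective_of_mul_eq_one {R m n : Type*} [Semiring R] [Fintype m] [Fintype n]
    [DecidableEq m] {A : Matrix m n R} {E : Matrix n m R} (h : A * E = 1) :
    Function.Injective E.mulVec := fun x y hxy => by
  simpa [mulVec_mulVec, h] using congrArg (A *ᵥ ·) hxy

variable {𝕜 m n : Type*} [RCLike 𝕜] [Fintype m] [Fintype n] [DecidableEq m] [DecidableEq n]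

theorem PosDef.fromBlocks_zero_zero {X : Matrix m m 𝕜} {Y : Matrix n n 𝕜}
    (hX : X.PosDef) (hY : Y.PosDef) : (fromBlocks X 0 0 Y).PosDef := by
  have : Invertible X := hX.isUnit.invertible
  have hpsd : (fromBlocks X 0 0 Y).PosSemidef := by
    simpa using (hX.fromBlocks₁₁ 0 Y).2 (by simpa using hY.posSemidef)
  exact hpsd.posDef_iff_isUnit.2 (isUnit_fromBlocks_zero₂₁.2 ⟨hX.isUnit, hY.isUnit⟩)

theorem sub_mul_nonsing_inv_mul_sub {M : Matrix n n 𝕜} (hM : IsUnit M) (D : Matrix n n 𝕜) :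
    (M - D) * M⁻¹ * (M - D) = M - D - D + D * M⁻¹ * D := by
  have h1 : M * M⁻¹ = 1 := mul_nonsing_inv M ((isUnit_iff_isUnit_det M).1 hM)
  have h2 : M⁻¹ * M = 1 := nonsing_inv_mul M ((isUnit_iff_isUnit_det M).1 hM)
  simp only [sub_mul, mul_sub, h1, Matrix.mul_assoc, h2, Matrix.mul_one, Matrix.one_mul]
  abel

theorem PosDef.posSemidef_conjTranspose_mul_inv_mul_sub_inv {M : Matrix n n 𝕜} (hM : M.PosDef)
    {E : Matrix n m 𝕜} (hE : Eᴴ * E = 1) :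
    (Eᴴ * M⁻¹ * E - (Eᴴ * M * E)⁻¹).PosSemidef := by
  have : Invertible M := hM.isUnit.invertible
  have hblock : (fromBlocks M 1 1 M⁻¹).PosSemidef := by
    simpa using (hM.fromBlocks₁₁ 1 M⁻¹).2 (by simpa using PosSemidef.zero)
  have hS : (Eᴴ * M * E).PosDef :=
    hM.conjTranspose_mul_mul_same (mulVec_injective_of_mul_eq_one hE)
  have : Invertible (Eᴴ * M * E) := hS.isUnit.invertible
  have hcompressed := hblock.conjTranspose_mul_mul_same (fromBlocks E 0 0 E)
  simp only [fromBlocks_conjTranspose, fromBlocks_multiply, conjTranspose_zero, Matrix.zero_mul,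
    Matrix.mul_zero, Matrix.mul_one, add_zero, zero_add, hE] at hcompressed
  simpa [Matrix.mul_assoc] using (hS.fromBlocks₁₁ 1 (Eᴴ * M⁻¹ * E)).1 (by simpa using hcompressed)

theorem PosDef.posSemidef_compress_mul_inv_mul_sub_of_mul_eq_smul {P D : Matrix n n 𝕜}
    (hM : (P + D).PosDef) (hD : D.IsHermitian) {E : Matrix n m 𝕜} (hE : Eᴴ * E = 1) {c : ℝ}
    (hDE : D * E = c • E) :
    (Eᴴ * P * (P + D)⁻¹ * P * E -
      Eᴴ * P * E * (Eᴴ * P * E + c • 1)⁻¹ * (Eᴴ * P * E)).PosSemidef := by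
  set M := P + D
  set S := Eᴴ * M * E
  have hED : Eᴴ * D = c • Eᴴ := by
    simpa [conjTranspose_mul, hD.eq] using congrArg (·ᴴ) hDE
  have hPM : P = M - D := (add_sub_cancel_right P D).symm
  have hPS : Eᴴ * P * E = S - c • 1 := by
    simp only [S, hPM, Matrix.mul_sub, Matrix.sub_mul, Matrix.mul_assoc, hDE, Matrix.mul_smul, hE]
  have hlhs : Eᴴ * P * M⁻¹ * P * E = S - c • 1 - c • 1 + c ^ 2 • (Eᴴ * M⁻¹ * E) := by
    calc Eᴴ * P * M⁻¹ * P * E = Eᴴ * ((M - D) * M⁻¹ * (M - D)) * E := by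
          rw [← hPM]; simp only [Matrix.mul_assoc]
      _ = Eᴴ * (M - D - D + D * M⁻¹ * D) * E := by rw [sub_mul_nonsing_inv_mul_sub hM.isUnit]
      _ = S - c • 1 - c • 1 + c ^ 2 • (Eᴴ * M⁻¹ * E) := by
          simp only [S, Matrix.mul_add, Matrix.add_mul, Matrix.mul_sub, Matrix.sub_mul,
            ← Matrix.mul_assoc, hED]
          simp only [Matrix.mul_assoc, hDE, Matrix.smul_mul, Matrix.mul_smul, hE, smul_smul, sq]
  have hS : IsUnit S := (hM.conjTranspose_mul_mul_same (mulVec_injective_of_mul_eq_one hE)).isUnit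
  have hrhs : (S - c • 1) * S⁻¹ * (S - c • 1) = S - c • 1 - c • 1 + c ^ 2 • S⁻¹ := by
    rw [sub_mul_nonsing_inv_mul_sub hS]
    simp [smul_smul, sq]
  rw [hPS, sub_add_cancel, hrhs, hlhs, add_sub_add_left_eq_sub, ← smul_sub]
  exact (hM.posSemidef_conjTranspose_mul_inv_mul_sub_inv hE).smul (sq_nonneg c)

end Matrix

theorem block_matrix_schur_bound_general
    {p q : ℕ}
    (A : Matrix (Fin p) (Fin p) ℝ)
    (C : Matrix (Fin q) (Fin q) ℝ)
    (B : Matrix (Fin q) (Fin p) ℝ)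
    (hP : (Matrix.fromBlocks A Bᵀ B C).PosSemidef)
    (Γ : Matrix (Fin p) (Fin p) ℝ) (hΓ : Γ.PosDef)
    (h : ℝ) (hh : 0 < h) :
    IsUnit (Matrix.fromBlocks A Bᵀ B C +
        Matrix.fromBlocks (h⁻¹ • Γ) 0 0 (h⁻¹ • (1 : Matrix (Fin q) (Fin q) ℝ))) ∧
    ((Matrix.fromCols B C *
        (Matrix.fromBlocks A Bᵀ B C +
          Matrix.fromBlocks (h⁻¹ • Γ) 0 0 (h⁻¹ • (1 : Matrix (Fin q) (Fin q) ℝ)))⁻¹ *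
        (Matrix.fromCols B C)ᵀ) -
      C * (C + h⁻¹ • (1 : Matrix (Fin q) (Fin q) ℝ))⁻¹ * C).PosSemidef := by
  set P := fromBlocks A Bᵀ B C
  set D := fromBlocks (h⁻¹ • Γ) 0 0 (h⁻¹ • (1 : Matrix (Fin q) (Fin q) ℝ))
  set E : Matrix (Fin p ⊕ Fin q) (Fin q) ℝ := fromRows 0 1
  have hD : D.PosDef :=
    (hΓ.smul (inv_pos.2 hh)).fromBlocks_zero_zero (PosDef.one.smul (inv_pos.2 hh))
  have hM : (P + D).PosDef := PosDef.posSemidef_add hP hD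
  have hE : Eᴴ * E = 1 := by simp [E, transpose_fromRows, fromCols_mul_fromRows]
  have hDE : D * E = h⁻¹ • E := by
    ext (i | i) j <;> simp [D, E, fromBlocks_mul_fromRows]
  have hF : fromCols B C = Eᴴ * P := by simp [E, P, transpose_fromRows, fromCols_mul_fromBlocks]
  have hC : Eᴴ * P * E = C := by rw [← hF]; simp [E, fromCols_mul_fromRows]
  have hFt : (fromCols B C)ᵀ = P * E := by
    rw [← conjTranspose_eq_transpose_of_trivial, hF, conjTranspose_mul, conjTranspose_conjTranspose,
      hP.isHermitian.eq]
  refine ⟨hM.isUnit, ?_⟩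
  have hcompress := hM.posSemidef_compress_mul_inv_mul_sub_of_mul_eq_smul hD.isHermitian hE hDE
  rwa [hC, ← hF, Matrix.mul_assoc _ P E, ← hFt] at hcompress

/-- Lemma: block-matrix inequality used in the covariance analysis.
If `P = [[A, Bᵀ],[B, C]]` is PSD, `Γ` is SPD and `h > 0`, then `P + blockdiag(h⁻¹Γ, h⁻¹I)` is
invertible and `[B C] (P + blockdiag(h⁻¹Γ, h⁻¹I))⁻¹ [B C]ᵀ ⪰ C (C + h⁻¹ I)⁻¹ C`. -/
theorem block_matrix_schur_bound
    {p q : ℕ}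
    (A : Matrix (Fin p) (Fin p) ℝ) (hA : A.IsSymm)
    (C : Matrix (Fin q) (Fin q) ℝ) (hC : C.IsSymm)
    (B : Matrix (Fin q) (Fin p) ℝ)
    (hP : (Matrix.fromBlocks A Bᵀ B C).PosSemidef)
    (Γ : Matrix (Fin p) (Fin p) ℝ) (hΓ : Γ.PosDef)
    (h : ℝ) (hh : 0 < h) :
    IsUnit (Matrix.fromBlocks A Bᵀ B C +
        Matrix.fromBlocks (h⁻¹ • Γ) 0 0 (h⁻¹ • (1 : Matrix (Fin q) (Fin q) ℝ))) ∧
    ((Matrix.fromCols B C *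
        (Matrix.fromBlocks A Bᵀ B C +
          Matrix.fromBlocks (h⁻¹ • Γ) 0 0 (h⁻¹ • (1 : Matrix (Fin q) (Fin q) ℝ)))⁻¹ *
        (Matrix.fromCols B C)ᵀ) -
      C * (C + h⁻¹ • (1 : Matrix (Fin q) (Fin q) ℝ))⁻¹ * C).PosSemidef :=
  block_matrix_schur_bound_general A C B hP Γ hΓ h hh
end
end

section
/- Let h_0, α_0 > 0 and let the parameters satisfy 0 ≤ γ ≤ 1 and β ≤ γ ≤ 1 + β. Define h_n = h_0 n^β and α_n² = α_0² h_0^{−1} n^{2γ−β−2} for n ≥ 1. Suppose (ω_n)_{n≥1} is a sequence of positive reals with ω_1 ≥ h_0/(1 + α_0² h_0) and ω_{n+1} ≥ (ω_n + h_n)/(1 + α_n²(ω_n + h_n)) for all n ≥ 1. Then there exists κ > 0 such that ω_n ≥ h_0 κ n^{1+β−γ} for all n ≥ 1. -/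
/-!
Put `s = 1 + β - γ ∈ [0, 1]` and `κ = min (1 + 4α₀²)⁻¹ (1 + α₀² h₀)⁻¹`; the second entry handles
`n = 1`, and `ωₙ ≥ h₀ κ nˢ` propagates by induction. Since `t ↦ t / (1 + a t)` is increasing, it
suffices to feed in `ωₙ = h₀ κ nˢ`. Bernoulli's inequality gives `(n + 1)ˢ ≤ nˢ + n^β` and
`(n + 1)ˢ ≤ 2 nˢ`, and the exponents are balanced so that
`nˢ · n^(2γ-β-2) · (κ nˢ + n^β) ≤ (κ + 1) n^β`: the denominator costs only a multiple
`2α₀²κ(κ + 1) ≤ 4α₀²κ` of `h₀ n^β`, which `κ (1 + 4α₀²) ≤ 1` absorbs.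
-/

open Real

lemma add_one_rpow_le_rpow_add_rpow {N s b : ℝ} (hN : 1 ≤ N) (hs0 : 0 ≤ s) (hs1 : s ≤ 1)
    (hsb : s - 1 ≤ b) : (N + 1) ^ s ≤ N ^ s + N ^ b := by
  have hN0 : 0 < N := by linarith
  have hbernoulli : (1 + N⁻¹) ^ s ≤ 1 + s * N⁻¹ :=
    rpow_one_add_le_one_add_mul_self (by linarith [inv_nonneg.2 hN0.le]) hs0 hs1
  calc (N + 1) ^ s = N ^ s * (1 + N⁻¹) ^ s := by
        rw [← mul_rpow hN0.le (by positivity), mul_add, mul_inv_cancel₀ hN0.ne', mul_one]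
    _ ≤ N ^ s * (1 + s * N⁻¹) := by gcongr
    _ = N ^ s + s * N ^ (s - 1) := by rw [rpow_sub_one hN0.ne']; ring
    _ ≤ N ^ s + 1 * N ^ b := by gcongr
    _ = N ^ s + N ^ b := by rw [one_mul]

lemma div_one_add_mul_le_div_one_add_mul {a x y : ℝ} (ha : 0 ≤ a) (hx : 0 ≤ x) (hxy : x ≤ y) :
    x / (1 + a * x) ≤ y / (1 + a * y) := by
  rw [div_le_div_iff₀ (by positivity) (by nlinarith)]
  nlinarith

lemma precision_step_normalized {N c κ γ β : ℝ} (hN : 1 ≤ N) (hc : 0 ≤ c) (hκ0 : 0 ≤ κ)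
    (hκ : κ * (1 + 4 * c) ≤ 1) (hγ0 : 0 ≤ γ) (hγ1 : γ ≤ 1) (hβγ : β ≤ γ) (hγβ : γ ≤ 1 + β) :
    κ * (N + 1) ^ (1 + β - γ) *
        (1 + c * N ^ (2 * γ - β - 2) * (κ * N ^ (1 + β - γ) + N ^ β)) ≤
      κ * N ^ (1 + β - γ) + N ^ β := by
  have hN0 : 0 < N := by linarith
  set s := 1 + β - γ
  have hsucc_β : (N + 1) ^ s ≤ N ^ s + N ^ β :=
    add_one_rpow_le_rpow_add_rpow hN (by linarith) (by linarith) (by linarith)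
  have hsucc_two : (N + 1) ^ s ≤ 2 * N ^ s := by
    linarith [add_one_rpow_le_rpow_add_rpow hN (s := s) (b := s) (by linarith) (by linarith)
      (by linarith)]
  have hloss : N ^ s * (N ^ (2 * γ - β - 2) * (κ * N ^ s + N ^ β)) ≤ (κ + 1) * N ^ β := by
    have hexact : N ^ s * N ^ (2 * γ - β - 2) * N ^ s = N ^ β := by
      rw [← rpow_add hN0, ← rpow_add hN0]; congr 1; ring
    have hlower : N ^ s * N ^ (2 * γ - β - 2) * N ^ β ≤ N ^ β := by
      rw [← rpow_add hN0, ← rpow_add hN0]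
      exact rpow_le_rpow_of_exponent_le hN (by linarith)
    calc N ^ s * (N ^ (2 * γ - β - 2) * (κ * N ^ s + N ^ β))
          = κ * (N ^ s * N ^ (2 * γ - β - 2) * N ^ s) + N ^ s * N ^ (2 * γ - β - 2) * N ^ β := by
            ring
      _ ≤ κ * N ^ β + N ^ β := by rw [hexact]; gcongr
      _ = (κ + 1) * N ^ β := by ring
  set q := N ^ (2 * γ - β - 2) * (κ * N ^ s + N ^ β)
  have hκ_le_one : κ ≤ 1 := by nlinarith
  calc κ * (N + 1) ^ s * (1 + c * N ^ (2 * γ - β - 2) * (κ * N ^ s + N ^ β))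
        = κ * (N + 1) ^ s + κ * c * ((N + 1) ^ s * q) := by ring
    _ ≤ κ * (N ^ s + N ^ β) + κ * c * (2 * ((κ + 1) * N ^ β)) := by
        gcongr κ * ?_ + κ * c * ?_
        calc (N + 1) ^ s * q ≤ 2 * N ^ s * q := by gcongr
          _ ≤ 2 * ((κ + 1) * N ^ β) := by rw [mul_assoc]; gcongr
    _ = κ * N ^ s + κ * (1 + 2 * c * (κ + 1)) * N ^ β := by ring
    _ ≤ κ * N ^ s + 1 * N ^ β := by
        gcongr
        nlinarith [mul_nonneg hκ0 hc]
    _ = κ * N ^ s + N ^ β := by rw [one_mul]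

lemma precision_step {N h₀ c κ γ β w : ℝ} (hN : 1 ≤ N) (hh₀ : 0 < h₀) (hc : 0 ≤ c)
    (hκ0 : 0 ≤ κ) (hκ : κ * (1 + 4 * c) ≤ 1) (hγ0 : 0 ≤ γ) (hγ1 : γ ≤ 1) (hβγ : β ≤ γ)
    (hγβ : γ ≤ 1 + β) (hw : h₀ * κ * N ^ (1 + β - γ) ≤ w) :
    h₀ * κ * (N + 1) ^ (1 + β - γ) ≤
      (w + h₀ * N ^ β) / (1 + (c * h₀⁻¹ * N ^ (2 * γ - β - 2)) * (w + h₀ * N ^ β)) := by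
  set s := 1 + β - γ
  set E := N ^ (2 * γ - β - 2)
  set x := κ * N ^ s + N ^ β
  have hrescale : h₀ * x / (1 + c * h₀⁻¹ * E * (h₀ * x)) = h₀ * (x / (1 + c * E * x)) := by
    rw [show c * h₀⁻¹ * E * (h₀ * x) = c * E * x by field_simp, mul_div_assoc]
  calc h₀ * κ * (N + 1) ^ s = h₀ * (κ * (N + 1) ^ s) := by ring
    _ ≤ h₀ * (x / (1 + c * E * x)) := by
        gcongr
        rw [le_div_iff₀ (by positivity)]
        exact precision_step_normalized hN hc hκ0 hκ hγ0 hγ1 hβγ hγβ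
    _ = h₀ * x / (1 + c * h₀⁻¹ * E * (h₀ * x)) := hrescale.symm
    _ ≤ (w + h₀ * N ^ β) / (1 + c * h₀⁻¹ * E * (w + h₀ * N ^ β)) :=
        div_one_add_mul_le_div_one_add_mul (by positivity) (by positivity)
          (by linarith [show h₀ * x = h₀ * κ * N ^ s + h₀ * N ^ β by ring])

theorem precision_sequence_lower_bound_general
    (h₀ α₀ γ β : ℝ) (hh₀ : 0 < h₀)
    (hγ0 : 0 ≤ γ) (hγ1 : γ ≤ 1) (hβγ : β ≤ γ) (hγβ : γ ≤ 1 + β)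
    (ω : ℕ → ℝ)
    (hω1 : h₀ / (1 + α₀ ^ 2 * h₀) ≤ ω 1)
    (hrec : ∀ n : ℕ, 1 ≤ n →
      (ω n + h₀ * (n : ℝ) ^ β) /
          (1 + (α₀ ^ 2 * h₀⁻¹ * (n : ℝ) ^ (2 * γ - β - 2)) * (ω n + h₀ * (n : ℝ) ^ β)) ≤
        ω (n + 1)) :
    ∃ κ : ℝ, 0 < κ ∧ ∀ n : ℕ, 1 ≤ n → h₀ * κ * (n : ℝ) ^ (1 + β - γ) ≤ ω n := by
  set κ := min (1 + 4 * α₀ ^ 2)⁻¹ (1 + α₀ ^ 2 * h₀)⁻¹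
  have hκ0 : 0 < κ := by positivity
  have hκ : κ * (1 + 4 * α₀ ^ 2) ≤ 1 :=
    calc κ * (1 + 4 * α₀ ^ 2) ≤ (1 + 4 * α₀ ^ 2)⁻¹ * (1 + 4 * α₀ ^ 2) := by
          gcongr; exact min_le_left _ _
      _ = 1 := inv_mul_cancel₀ (by positivity)
  refine ⟨κ, hκ0, fun n hn => ?_⟩
  induction n, hn using Nat.le_induction with
  | base =>
    calc h₀ * κ * ((1 : ℕ) : ℝ) ^ (1 + β - γ) = h₀ * κ := by simp
      _ ≤ h₀ * (1 + α₀ ^ 2 * h₀)⁻¹ := by gcongr; exact min_le_right _ _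
      _ ≤ ω 1 := hω1
  | succ n hn ih =>
    push_cast
    exact (precision_step (by exact_mod_cast hn) hh₀ (sq_nonneg α₀) hκ0.le hκ hγ0 hγ1 hβγ hγβ
      ih).trans (hrec n hn)

/-- Lemma: lower bound for the recursive precision sequence `ωₙ`. -/
theorem precision_sequence_lower_bound
    (h₀ α₀ γ β : ℝ) (hh₀ : 0 < h₀) (hα₀ : 0 < α₀)
    (hγ0 : 0 ≤ γ) (hγ1 : γ ≤ 1) (hβγ : β ≤ γ) (hγβ : γ ≤ 1 + β)
    (ω : ℕ → ℝ) (hωpos : ∀ n : ℕ, 1 ≤ n → 0 < ω n)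
    (hω1 : h₀ / (1 + α₀ ^ 2 * h₀) ≤ ω 1)
    (hrec : ∀ n : ℕ, 1 ≤ n →
      (ω n + h₀ * (n : ℝ) ^ β) /
          (1 + (α₀ ^ 2 * h₀⁻¹ * (n : ℝ) ^ (2 * γ - β - 2)) * (ω n + h₀ * (n : ℝ) ^ β)) ≤
        ω (n + 1)) :
    ∃ κ : ℝ, 0 < κ ∧ ∀ n : ℕ, 1 ≤ n → h₀ * κ * (n : ℝ) ^ (1 + β - γ) ≤ ω n :=
  precision_sequence_lower_bound_general h₀ α₀ γ β hh₀ hγ0 hγ1 hβγ hγβ ω hω1 hrec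
end

section
/- Let h_0, α_0, κ, M > 0 and let the parameters satisfy 0 ≤ γ ≤ 1 and γ − 1 ≤ β ≤ γ. Define h_n = h_0 n^β for n ≥ 1. Suppose (c_n)_{n≥1} and (ω_n)_{n≥1} are sequences of positive reals with c_1 ≥ α_0² h_0^{−1}, ω_n ≥ h_0 κ n^{1+β−γ} for all n ≥ 1, and c_{n+1} ≥ c_n/(1 + M h_n/ω_n) + α_0² h_0^{−1} n^{2γ−β−2} for all n ≥ 1. Then there exists η > 0 such that c_n ≥ η n^{γ−β−1} for all n ≥ 1. -/
/-!
Set `A = α₀² h₀⁻¹`, `s n = n^(γ-β-1)`, `t n = n^(γ-1)`. The recursion reads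
`c (n+1) ≥ c n / (1 + d n) + A s n t n` with `d n = M hₙ / ωₙ ≤ (M/κ) t n`. A constant `η` with
`η (M/κ) ≤ A` satisfies `η ≤ η / (1 + d) + A t` (the contraction loses at most `η d ≤ η (M/κ) t`),
so `c n ≥ η s n` propagates by induction, using that `s` is antitone because `γ - β - 1 ≤ 0`.
-/

open Real

theorem le_div_one_add_add_mul {η A L d t : ℝ} (hη : 0 ≤ η) (ht : 0 ≤ t) (hd : 0 ≤ d)
    (hdt : d ≤ L * t) (hηL : η * L ≤ A) : η ≤ η / (1 + d) + A * t := by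
  have hloss : η * d / (1 + d) ≤ η * d := div_le_self (by positivity) (by linarith)
  have hsplit : η = η / (1 + d) + η * d / (1 + d) := by field_simp
  nlinarith [mul_le_mul_of_nonneg_left hdt hη, mul_le_mul_of_nonneg_right hηL ht]

theorem lower_bound_of_le_div_one_add_add {c d s t : ℕ → ℝ} {η A L : ℝ} (hη : 0 ≤ η)
    (hηL : η * L ≤ A) (hs : ∀ n ≥ 1, 0 ≤ s n) (hs_anti : ∀ n ≥ 1, s (n + 1) ≤ s n)
    (ht : ∀ n ≥ 1, 0 ≤ t n) (hd : ∀ n ≥ 1, 0 ≤ d n) (hdt : ∀ n ≥ 1, d n ≤ L * t n)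
    (h1 : η * s 1 ≤ c 1) (hrec : ∀ n ≥ 1, c n / (1 + d n) + A * (s n * t n) ≤ c (n + 1)) :
    ∀ n ≥ 1, η * s n ≤ c n := by
  intro n hn
  induction n, hn using Nat.le_induction with
  | base => exact h1
  | succ n hn ih =>
    have hd1 : 0 < 1 + d n := by linarith [hd n hn]
    calc η * s (n + 1) ≤ η * s n := mul_le_mul_of_nonneg_left (hs_anti n hn) hη
      _ ≤ s n * (η / (1 + d n) + A * t n) := by
          rw [mul_comm η]
          exact mul_le_mul_of_nonneg_left
            (le_div_one_add_add_mul hη (ht n hn) (hd n hn) (hdt n hn) hηL) (hs n hn)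
      _ = η * s n / (1 + d n) + A * (s n * t n) := by ring
      _ ≤ c n / (1 + d n) + A * (s n * t n) := by gcongr
      _ ≤ c (n + 1) := hrec n hn

theorem mul_div_le_mul_rpow_sub {h₀ κ M x β γ ω : ℝ} (hh₀ : 0 < h₀) (hκ : 0 < κ) (hM : 0 ≤ M)
    (hx : 0 < x) (hω : h₀ * κ * x ^ (1 + β - γ) ≤ ω) :
    M * (h₀ * x ^ β) / ω ≤ M / κ * x ^ (γ - 1) := by
  calc M * (h₀ * x ^ β) / ω ≤ M * (h₀ * x ^ β) / (h₀ * κ * x ^ (1 + β - γ)) := by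
        gcongr
    _ = M / κ * (x ^ β / x ^ (1 + β - γ)) := by field_simp
    _ = M / κ * x ^ (γ - 1) := by rw [← rpow_sub hx]; ring_nf

theorem covariance_sequence_lower_bound_general
    (h₀ α₀ κ M γ β : ℝ) (hh₀ : 0 < h₀) (hα₀ : 0 < α₀) (hκ : 0 < κ) (hM : 0 < M)
    (hβl : γ - 1 ≤ β)
    (c ω : ℕ → ℝ)
    (hc1 : α₀ ^ 2 * h₀⁻¹ ≤ c 1)
    (hω : ∀ n : ℕ, 1 ≤ n → h₀ * κ * (n : ℝ) ^ (1 + β - γ) ≤ ω n)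
    (hrec : ∀ n : ℕ, 1 ≤ n →
      c n / (1 + M * (h₀ * (n : ℝ) ^ β) / ω n) +
          α₀ ^ 2 * h₀⁻¹ * (n : ℝ) ^ (2 * γ - β - 2) ≤ c (n + 1)) :
    ∃ η : ℝ, 0 < η ∧ ∀ n : ℕ, 1 ≤ n → η * (n : ℝ) ^ (γ - β - 1) ≤ c n := by
  set A := α₀ ^ 2 * h₀⁻¹
  have hA : 0 < A := by positivity
  have hL : 0 < M / κ := by positivity
  have hη : A / (1 + M / κ) ≤ A := div_le_self hA.le (by linarith)
  refine ⟨A / (1 + M / κ), by positivity, ?_⟩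
  have hpos : ∀ n : ℕ, 1 ≤ n → (0 : ℝ) < n := fun n hn => by exact_mod_cast hn
  refine lower_bound_of_le_div_one_add_add (L := M / κ) (A := A)
    (t := fun n : ℕ => (n : ℝ) ^ (γ - 1)) (d := fun n : ℕ => M * (h₀ * (n : ℝ) ^ β) / ω n)
    (by positivity) ?_ (fun n _ => by positivity) (fun n hn => ?_) (fun n _ => by positivity)
    (fun n hn => ?_) (fun n hn => mul_div_le_mul_rpow_sub hh₀ hκ hM.le (hpos n hn) (hω n hn))
    (by simpa using hη.trans hc1) (fun n hn => ?_)
  · rw [div_mul_eq_mul_div, div_le_iff₀ (by positivity)]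
    nlinarith
  · push_cast
    exact rpow_le_rpow_of_nonpos (hpos n hn) (by linarith) (by linarith)
  · have hn' := hpos n hn
    have : 0 < ω n := lt_of_lt_of_le (by positivity) (hω n hn)
    positivity
  · convert hrec n hn using 3
    rw [← rpow_add (hpos n hn)]
    ring_nf

/-- Lemma: lower bound for the recursive covariance sequence `cₙ`. -/
theorem covariance_sequence_lower_bound
    (h₀ α₀ κ M γ β : ℝ) (hh₀ : 0 < h₀) (hα₀ : 0 < α₀) (hκ : 0 < κ) (hM : 0 < M)
    (hγ0 : 0 ≤ γ) (hγ1 : γ ≤ 1) (hβl : γ - 1 ≤ β) (hβu : β ≤ γ)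
    (c ω : ℕ → ℝ)
    (hcpos : ∀ n : ℕ, 1 ≤ n → 0 < c n) (hωpos : ∀ n : ℕ, 1 ≤ n → 0 < ω n)
    (hc1 : α₀ ^ 2 * h₀⁻¹ ≤ c 1)
    (hω : ∀ n : ℕ, 1 ≤ n → h₀ * κ * (n : ℝ) ^ (1 + β - γ) ≤ ω n)
    (hrec : ∀ n : ℕ, 1 ≤ n →
      c n / (1 + M * (h₀ * (n : ℝ) ^ β) / ω n) +
          α₀ ^ 2 * h₀⁻¹ * (n : ℝ) ^ (2 * γ - β - 2) ≤ c (n + 1)) :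
    ∃ η : ℝ, 0 < η ∧ ∀ n : ℕ, 1 ≤ n → η * (n : ℝ) ^ (γ - β - 1) ≤ c n :=
  covariance_sequence_lower_bound_general h₀ α₀ κ M γ β hh₀ hα₀ hκ hM hβl c ω hc1 hω hrec
end

section
/- Let u^{(1)},…,u^{(K)} ∈ ℝ^{d_u} be an ensemble and let H : ℝ^{d_u} → ℝ^{d_y+d_u} be differentiable with second-order Taylor remainder bound ‖H(x′) − H(x) − ∇H(x)(x′−x)‖ ≤ M_2‖x′−x‖² for all x, x′. Then the sample cross-covariance satisfies ‖C^{up} − C^{uu} (∇H(m))ᵀ‖ ≤ M_2 d_u √K ‖C^{uu}‖^{3/2}, where m is the sample mean of the ensemble. -/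
open scoped BigOperators
open Matrix

noncomputable section

/-! Centering only the first factor, `C^{up} - C^{uu} Jᵀ = (1/K) ∑ᵢ (uᵢ - m) rᵢᵀ` with
`J = ∇H(m)` and `rᵢ = H uᵢ - H m - J (uᵢ - m)` the Taylor remainder at the mean, so the left side is at most
`(M₂/K) ∑ᵢ ‖uᵢ - m‖³`. Testing `C^{uu}` against `uᵢ - m` gives `‖uᵢ - m‖² ≤ K ‖C^{uu}‖`, and
`(1/K) ∑ᵢ ‖uᵢ - m‖² = tr C^{uu} ≤ d_u ‖C^{uu}‖`. -/

open scoped Matrix.Norms.L2Operator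
open WithLp

theorem evNorm_eq_norm_toLp {d : ℕ} (v : Fin d → ℝ) : evNorm v = ‖toLp 2 v‖ := by
  simp [evNorm, EuclideanSpace.norm_eq]

theorem spNorm_eq_l2_opNorm {p q : ℕ} (A : Matrix (Fin p) (Fin q) ℝ) : spNorm A = ‖A‖ := by
  rw [Matrix.l2_opNorm_def, ← ContinuousLinearMap.sSup_unitClosedBall_eq_norm, spNorm]
  congr 1
  ext r
  simp only [Set.mem_ofPred_eq, Set.mem_image, Metric.mem_closedBall, dist_zero_right,
    evNorm_eq_norm_toLp]
  constructor
  · rintro ⟨v, hv, rfl⟩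
    exact ⟨toLp 2 v, hv, rfl⟩
  · rintro ⟨x, hx, rfl⟩
    exact ⟨ofLp x, hx, rfl⟩

namespace Matrix

variable {m n : Type*} [Fintype m] [Fintype n]

theorem dotProduct_self_eq_norm_sq (v : n → ℝ) : v ⬝ᵥ v = ‖toLp 2 v‖ ^ 2 := by
  rw [EuclideanSpace.norm_sq_eq]
  simp [dotProduct, sq]

variable [DecidableEq n]

theorem l2_opNorm_le_of_norm_mulVec_le {A : Matrix m n ℝ} {c : ℝ} (hc : 0 ≤ c)
    (h : ∀ v : n → ℝ, ‖toLp 2 (A *ᵥ v)‖ ≤ c * ‖toLp 2 v‖) : ‖A‖ ≤ c := by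
  rw [l2_opNorm_def]
  exact ContinuousLinearMap.opNorm_le_bound _ hc fun x => h (ofLp x)

theorem l2_opNorm_vecMulVec_le (x : m → ℝ) (y : n → ℝ) :
    ‖vecMulVec x y‖ ≤ ‖toLp 2 x‖ * ‖toLp 2 y‖ := by
  refine l2_opNorm_le_of_norm_mulVec_le (by positivity) fun v => ?_
  have hdot : |y ⬝ᵥ v| ≤ ‖toLp 2 y‖ * ‖toLp 2 v‖ := by
    simpa [dotProduct, PiLp.inner_apply, mul_comm] using
      abs_real_inner_le_norm (toLp 2 y) (toLp 2 v)
  calc ‖toLp 2 (vecMulVec x y *ᵥ v)‖ = |y ⬝ᵥ v| * ‖toLp 2 x‖ := by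
        rw [vecMulVec_mulVec]; simp [norm_smul]
    _ ≤ ‖toLp 2 x‖ * ‖toLp 2 y‖ * ‖toLp 2 v‖ := by nlinarith [norm_nonneg (toLp 2 x)]

theorem dotProduct_mulVec_le_l2_opNorm (A : Matrix n n ℝ) (v : n → ℝ) :
    v ⬝ᵥ A *ᵥ v ≤ ‖A‖ * ‖toLp 2 v‖ ^ 2 := by
  have hA : ‖toLp 2 (A *ᵥ v)‖ ≤ ‖A‖ * ‖toLp 2 v‖ := l2_opNorm_mulVec A (toLp 2 v)
  calc v ⬝ᵥ A *ᵥ v ≤ ‖toLp 2 v‖ * ‖toLp 2 (A *ᵥ v)‖ := by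
        simpa [dotProduct, PiLp.inner_apply, mul_comm] using
          real_inner_le_norm (toLp 2 v) (toLp 2 (A *ᵥ v))
    _ ≤ ‖A‖ * ‖toLp 2 v‖ ^ 2 := by nlinarith [norm_nonneg (toLp 2 v)]

theorem diag_le_l2_opNorm (A : Matrix n n ℝ) (j : n) : A j j ≤ ‖A‖ := by
  simpa using dotProduct_mulVec_le_l2_opNorm A (Pi.single j 1)

theorem trace_le_card_mul_l2_opNorm (A : Matrix n n ℝ) : A.trace ≤ Fintype.card n * ‖A‖ := by
  simpa [trace] using Finset.sum_le_sum fun j (_ : j ∈ Finset.univ) => diag_le_l2_opNorm A j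

theorem l2_opNorm_smul_sum_vecMulVec_le {ι : Type*} (s : Finset ι) (c : ℝ) (x : ι → m → ℝ)
    (y : ι → n → ℝ) :
    ‖c • ∑ i ∈ s, vecMulVec (x i) (y i)‖ ≤ |c| * ∑ i ∈ s, ‖toLp 2 (x i)‖ * ‖toLp 2 (y i)‖ := by
  rw [norm_smul, Real.norm_eq_abs]
  gcongr
  exact (norm_sum_le _ _).trans (Finset.sum_le_sum fun i _ => l2_opNorm_vecMulVec_le _ _)

end Matrix

section SampleCovariance

variable {K p q : ℕ}

theorem sum_sub_sMean (u : Fin K → Fin p → ℝ) : ∑ i, (u i - sMean u) = 0 := by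
  rcases eq_or_ne K 0 with rfl | hK
  · simp
  rw [Finset.sum_sub_distrib, Finset.sum_const, Finset.card_univ, Fintype.card_fin, sMean,
    ← Nat.cast_smul_eq_nsmul ℝ, smul_inv_smul₀ (Nat.cast_ne_zero.2 hK), sub_self]

theorem sCov_eq_smul_sum_vecMulVec (a : Fin K → Fin p → ℝ) (b : Fin K → Fin q → ℝ)
    (c : Fin q → ℝ) : sCov a b = (K : ℝ)⁻¹ • ∑ i, vecMulVec (a i - sMean a) (b i - c) := by
  have hcenter : ∑ i, vecMulVec (a i - sMean a) (sMean b - c) = 0 := by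
    have hsum := congrFun (sum_sub_sMean a)
    simp only [Finset.sum_apply, Pi.zero_apply] at hsum
    ext j l
    simp only [Matrix.sum_apply, vecMulVec_apply, ← Finset.sum_mul, hsum, zero_mul,
      Matrix.zero_apply]
  have hsplit : ∀ i, b i - c = (b i - sMean b) + (sMean b - c) := fun i => by abel
  simp_rw [hsplit, vecMulVec_add, Finset.sum_add_distrib, hcenter, add_zero]
  rfl

theorem sCov_sub_sCov_mul_transpose (a : Fin K → Fin p → ℝ) (b : Fin K → Fin q → ℝ)
    (J : Matrix (Fin q) (Fin p) ℝ) (c : Fin q → ℝ) :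
    sCov a b - sCov a a * Jᵀ =
      (K : ℝ)⁻¹ • ∑ i, vecMulVec (a i - sMean a) (b i - c - J *ᵥ (a i - sMean a)) := by
  rw [sCov_eq_smul_sum_vecMulVec a b c, sCov_eq_smul_sum_vecMulVec a a (sMean a), smul_mul,
    Matrix.sum_mul, ← smul_sub, ← Finset.sum_sub_distrib]
  simp_rw [vecMulVec_mul, vecMul_transpose, vecMulVec_sub]

theorem dotProduct_sCov_mulVec (u : Fin K → Fin p → ℝ) (v : Fin p → ℝ) :
    v ⬝ᵥ sCov u u *ᵥ v = (K : ℝ)⁻¹ * ∑ i, ((u i - sMean u) ⬝ᵥ v) ^ 2 := by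
  rw [sCov_eq_smul_sum_vecMulVec u u (sMean u)]
  simp only [smul_mulVec, sum_mulVec, vecMulVec_mulVec, dotProduct_smul, dotProduct_sum]
  simp [dotProduct_comm v, sq, Finset.mul_sum]

theorem trace_sCov (u : Fin K → Fin p → ℝ) :
    (sCov u u).trace = (K : ℝ)⁻¹ * ∑ i, ‖toLp 2 (u i - sMean u)‖ ^ 2 := by
  rw [sCov_eq_smul_sum_vecMulVec u u (sMean u)]
  simp only [trace_smul, trace_sum, trace_vecMulVec, dotProduct_self_eq_norm_sq, smul_eq_mul]

theorem norm_sub_sMean_sq_le (u : Fin K → Fin p → ℝ) (i : Fin K) :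
    ‖toLp 2 (u i - sMean u)‖ ^ 2 ≤ K * ‖sCov u u‖ := by
  set x := u i - sMean u
  have hK : (K : ℝ) ≠ 0 := Nat.cast_ne_zero.2 (Fin.pos i).ne'
  have hquartic : ‖toLp 2 x‖ ^ 2 * ‖toLp 2 x‖ ^ 2 ≤ K * (x ⬝ᵥ sCov u u *ᵥ x) := by
    rw [dotProduct_sCov_mulVec, mul_inv_cancel_left₀ hK, ← dotProduct_self_eq_norm_sq, ← sq]
    exact Finset.single_le_sum (f := fun j => ((u j - sMean u) ⬝ᵥ x) ^ 2)
      (fun _ _ => sq_nonneg _) (Finset.mem_univ i)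
  have hquad := dotProduct_mulVec_le_l2_opNorm (sCov u u) x
  rcases (sq_nonneg ‖toLp 2 x‖).eq_or_lt with hx | hx
  · rw [← hx]; positivity
  · refine le_of_mul_le_mul_left ?_ hx
    nlinarith [Nat.cast_nonneg (α := ℝ) K]

theorem mean_norm_sub_sMean_pow_three_le (u : Fin K → Fin p → ℝ) :
    (K : ℝ)⁻¹ * ∑ i, ‖toLp 2 (u i - sMean u)‖ ^ 3 ≤
      p * Real.sqrt K * ‖sCov u u‖ ^ ((3 : ℝ) / 2) := by
  set C := sCov u u
  have hdev : ∀ i, ‖toLp 2 (u i - sMean u)‖ ≤ Real.sqrt (K * ‖C‖) := fun i =>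
    (le_abs_self _).trans (Real.abs_le_sqrt (norm_sub_sMean_sq_le u i))
  calc (K : ℝ)⁻¹ * ∑ i, ‖toLp 2 (u i - sMean u)‖ ^ 3
      ≤ (K : ℝ)⁻¹ * ∑ i, Real.sqrt (K * ‖C‖) * ‖toLp 2 (u i - sMean u)‖ ^ 2 := by
        gcongr with i
        rw [pow_succ']
        gcongr
        exact hdev i
    _ = Real.sqrt (K * ‖C‖) * C.trace := by
        rw [trace_sCov, ← Finset.mul_sum]; ring
    _ ≤ Real.sqrt (K * ‖C‖) * (p * ‖C‖) := by
        gcongr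
        simpa using trace_le_card_mul_l2_opNorm C
    _ = p * Real.sqrt K * ‖C‖ ^ ((3 : ℝ) / 2) := by
        rw [Real.sqrt_mul (Nat.cast_nonneg K), show (3 : ℝ) / 2 = 1 + 1 / 2 by norm_num,
          Real.rpow_add' (norm_nonneg C) (by norm_num), Real.rpow_one, ← Real.sqrt_eq_rpow]
        ring

theorem l2_opNorm_sCov_sub_sCov_mul_transpose_le (a : Fin K → Fin p → ℝ)
    (b : Fin K → Fin q → ℝ) (J : Matrix (Fin q) (Fin p) ℝ) (c : Fin q → ℝ) :
    ‖sCov a b - sCov a a * Jᵀ‖ ≤ (K : ℝ)⁻¹ * ∑ i, ‖toLp 2 (a i - sMean a)‖ *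
      ‖toLp 2 (b i - c - J *ᵥ (a i - sMean a))‖ := by
  rw [sCov_sub_sCov_mul_transpose a b J c]
  refine (Matrix.l2_opNorm_smul_sum_vecMulVec_le _ _ _ _).trans_eq ?_
  rw [abs_of_nonneg (by positivity)]

end SampleCovariance

theorem cross_covariance_linearization_general
    {du dy K : ℕ}
    (H : (Fin du → ℝ) → Fin (dy + du) → ℝ)
    (M₂ : ℝ)
    (hTay : ∀ x x',
      evNorm (H x' - H x - (jac H x).mulVec (x' - x)) ≤ M₂ * evNorm (x' - x) ^ 2)
    (u : Fin K → Fin du → ℝ) :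
    spNorm (sCov u (fun i => H (u i)) - sCov u u * (jac H (sMean u))ᵀ) ≤
      M₂ * du * Real.sqrt K * spNorm (sCov u u) ^ ((3 : ℝ) / 2) := by
  simp only [spNorm_eq_l2_opNorm, evNorm_eq_norm_toLp] at hTay ⊢
  rcases eq_or_ne du 0 with rfl | hdu
  · rw [Subsingleton.elim (sCov u (fun i => H (u i)) - sCov u u * (jac H (sMean u))ᵀ) 0]
    simp
  have hM : 0 ≤ M₂ := by
    have : NeZero du := ⟨hdu⟩
    simpa using (norm_nonneg _).trans (hTay 0 (Pi.single 0 1))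
  calc _ ≤ (K : ℝ)⁻¹ * ∑ i, ‖toLp 2 (u i - sMean u)‖ *
        ‖toLp 2 (H (u i) - H (sMean u) - jac H (sMean u) *ᵥ (u i - sMean u))‖ :=
        l2_opNorm_sCov_sub_sCov_mul_transpose_le _ _ _ _
    _ ≤ (K : ℝ)⁻¹ * ∑ i, ‖toLp 2 (u i - sMean u)‖ * (M₂ * ‖toLp 2 (u i - sMean u)‖ ^ 2) := by
        gcongr with i
        exact hTay _ _
    _ = M₂ * ((K : ℝ)⁻¹ * ∑ i, ‖toLp 2 (u i - sMean u)‖ ^ 3) := by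
        simp only [Finset.mul_sum]
        exact Finset.sum_congr rfl fun i _ => by ring
    _ ≤ M₂ * (du * Real.sqrt K * ‖sCov u u‖ ^ ((3 : ℝ) / 2)) :=
        mul_le_mul_of_nonneg_left (mean_norm_sub_sMean_pow_three_le u) hM
    _ = _ := by ring

/-- Lemma: the sample cross-covariance is close to `Cᵘᵘ Jᵀ`. -/
theorem cross_covariance_linearization
    {du dy K : ℕ}
    (H : (Fin du → ℝ) → Fin (dy + du) → ℝ)
    (hdiff : Differentiable ℝ H)
    (M₂ : ℝ)
    (hTay : ∀ x x',
      evNorm (H x' - H x - (jac H x).mulVec (x' - x)) ≤ M₂ * evNorm (x' - x) ^ 2)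
    (u : Fin K → Fin du → ℝ) :
    spNorm (sCov u (fun i => H (u i)) - sCov u u * (jac H (sMean u))ᵀ) ≤
      M₂ * du * Real.sqrt K * spNorm (sCov u u) ^ ((3 : ℝ) / 2) :=
  cross_covariance_linearization_general H M₂ hTay u
end
end

section
/- Let u^{(1)},…,u^{(K)} ∈ ℝ^{d_u} be an ensemble with sample mean m, let H : ℝ^{d_u} → ℝ^{d_y+d_u} be differentiable with ‖H(x′) − H(x) − ∇H(x)(x′−x)‖ ≤ M_2‖x′−x‖² for all x, x′, and define the linearization residuals r^{(i)} = H(u^{(i)}) − H(m) − ∇H(m)(u^{(i)} − m) with mean r̄ = (1/K)∑_i r^{(i)} and sample covariance C^{rr} = (1/K)∑_i (r^{(i)} − r̄)(r^{(i)} − r̄)ᵀ. Then ‖C^{rr}‖ ≤ tr(C^{rr}) ≤ M_2² K d_u² ‖C^{uu}‖². -/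
/-!
The residuals are quadratically small: `‖r⁽ⁱ⁾‖ ≤ M₂ ‖u⁽ⁱ⁾ − m‖²`. Centering only decreases second
moments, so `tr C^{rr} ≤ K⁻¹ ∑ᵢ ‖r⁽ⁱ⁾‖² ≤ K⁻¹ M₂² (∑ᵢ ‖u⁽ⁱ⁾ − m‖²)²`, and
`∑ᵢ ‖u⁽ⁱ⁾ − m‖² = K tr C^{uu} ≤ K d_u ‖C^{uu}‖`. The first inequality holds for any sample
covariance `C`: Cauchy–Schwarz gives `C_{jl}² ≤ C_{jj} C_{ll}`, so the Frobenius norm of `C`, which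
dominates its spectral norm, is at most `tr C`.
-/

open scoped BigOperators
open Matrix

noncomputable section

section

open Finset

lemma sq_evNorm {d : ℕ} (v : Fin d → ℝ) : evNorm v ^ 2 = ∑ i, v i ^ 2 :=
  Real.sq_sqrt (sum_nonneg fun _ _ => sq_nonneg _)

lemma sum_sq_le_one_of_evNorm_le_one {d : ℕ} {v : Fin d → ℝ} (hv : evNorm v ≤ 1) :
    ∑ i, v i ^ 2 ≤ 1 :=
  Real.sqrt_le_one.mp hv

section SpectralNorm

variable {p q : ℕ} (A : Matrix (Fin p) (Fin q) ℝ)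

lemma evNorm_mulVec_le_frobenius {v : Fin q → ℝ} (hv : evNorm v ≤ 1) :
    evNorm (A *ᵥ v) ≤ √(∑ j, ∑ l, A j l ^ 2) := by
  refine Real.sqrt_le_sqrt (sum_le_sum fun j _ => ?_)
  calc (A *ᵥ v) j ^ 2 = (∑ l, A j l * v l) ^ 2 := rfl
    _ ≤ (∑ l, A j l ^ 2) * ∑ l, v l ^ 2 := sum_mul_sq_le_sq_mul_sq _ _ _
    _ ≤ ∑ l, A j l ^ 2 := mul_le_of_le_one_right (by positivity)
        (sum_sq_le_one_of_evNorm_le_one hv)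

lemma bddAbove_evNorm_mulVec :
    BddAbove {r : ℝ | ∃ v : Fin q → ℝ, evNorm v ≤ 1 ∧ r = evNorm (A *ᵥ v)} := by
  refine ⟨√(∑ j, ∑ l, A j l ^ 2), ?_⟩
  rintro r ⟨v, hv, rfl⟩
  exact evNorm_mulVec_le_frobenius A hv

lemma spNorm_le_frobenius : spNorm A ≤ √(∑ j, ∑ l, A j l ^ 2) := by
  refine Real.sSup_le ?_ (Real.sqrt_nonneg _)
  rintro r ⟨v, hv, rfl⟩
  exact evNorm_mulVec_le_frobenius A hv

lemma evNorm_single_one {d : ℕ} (j : Fin d) : evNorm (Pi.single j (1 : ℝ)) = 1 := by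
  simp [evNorm, Pi.single_apply]

lemma diag_le_spNorm {d : ℕ} (A : Matrix (Fin d) (Fin d) ℝ) (j : Fin d) : A j j ≤ spNorm A := by
  have hcol : A j j ≤ evNorm (A *ᵥ Pi.single j 1) := calc
    A j j ≤ |A j j| := le_abs_self _
    _ = √((A *ᵥ Pi.single j 1) j ^ 2) := by simp [Real.sqrt_sq_eq_abs]
    _ ≤ evNorm (A *ᵥ Pi.single j 1) := Real.sqrt_le_sqrt <|
        single_le_sum (f := fun i => (A *ᵥ Pi.single j 1) i ^ 2) (fun _ _ => sq_nonneg _)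
          (mem_univ j)
  exact hcol.trans (le_csSup (bddAbove_evNorm_mulVec A) ⟨_, (evNorm_single_one j).le, rfl⟩)

lemma trace_le_mul_spNorm {d : ℕ} (A : Matrix (Fin d) (Fin d) ℝ) :
    A.trace ≤ d * spNorm A := by
  calc A.trace = ∑ j, A j j := rfl
    _ ≤ ∑ _j : Fin d, spNorm A := sum_le_sum fun j _ => diag_le_spNorm A j
    _ = d * spNorm A := by simp

end SpectralNorm

lemma sum_sq_sub_mean_le_sum_sq {K : ℕ} (a : Fin K → ℝ) :
    ∑ i, (a i - (K : ℝ)⁻¹ * ∑ k, a k) ^ 2 ≤ ∑ i, a i ^ 2 := by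
  obtain rfl | hK := K.eq_zero_or_pos
  · simp
  have hvar : ∑ i, (a i - (K : ℝ)⁻¹ * ∑ k, a k) ^ 2
      = ∑ i, a i ^ 2 - (K : ℝ)⁻¹ * (∑ k, a k) ^ 2 := by
    simp only [sub_sq, sum_add_distrib, sum_sub_distrib, ← sum_mul, ← mul_sum, sum_const,
      card_univ, Fintype.card_fin, nsmul_eq_mul]
    field_simp
    ring
  rw [hvar]
  exact sub_le_self _ (by positivity)

section SampleCovariance

variable {K : ℕ}

lemma sCov_apply {p q : ℕ} (a : Fin K → Fin p → ℝ) (b : Fin K → Fin q → ℝ) (j : Fin p)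
    (l : Fin q) : sCov a b j l = (K : ℝ)⁻¹ * ∑ i, (a i j - sMean a j) * (b i l - sMean b l) := by
  simp [sCov, Matrix.sum_apply]

variable {d : ℕ} (r : Fin K → Fin d → ℝ)

lemma sCov_self_diag_nonneg (j : Fin d) : 0 ≤ sCov r r j j := by
  rw [sCov_apply]
  exact mul_nonneg (by positivity) (sum_nonneg fun _ _ => mul_self_nonneg _)

lemma sq_sCov_self_le_mul_diag (j l : Fin d) :
    sCov r r j l ^ 2 ≤ sCov r r j j * sCov r r l l := by
  simp only [sCov_apply, ← sq]
  rw [mul_pow, mul_mul_mul_comm, ← sq]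
  gcongr
  exact sum_mul_sq_le_sq_mul_sq _ _ _

lemma spNorm_sCov_self_le_trace : spNorm (sCov r r) ≤ (sCov r r).trace := by
  have hfrob : ∑ j, ∑ l, sCov r r j l ^ 2 ≤ (sCov r r).trace ^ 2 := calc
    _ ≤ ∑ j, ∑ l, sCov r r j j * sCov r r l l :=
      sum_le_sum fun j _ => sum_le_sum fun l _ => sq_sCov_self_le_mul_diag r j l
    _ = _ := by rw [sq, ← sum_mul_sum]; rfl
  exact (spNorm_le_frobenius _).trans <|
    (Real.sqrt_le_left (sum_nonneg fun j _ => sCov_self_diag_nonneg r j)).mpr hfrob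

lemma trace_sCov_self : (sCov r r).trace = (K : ℝ)⁻¹ * ∑ i, evNorm (r i - sMean r) ^ 2 := by
  simp only [Matrix.trace, Matrix.diag, sCov_apply, sq_evNorm, ← mul_sum, Pi.sub_apply, ← sq]
  rw [sum_comm]

lemma trace_sCov_self_le_second_moment :
    (sCov r r).trace ≤ (K : ℝ)⁻¹ * ∑ i, evNorm (r i) ^ 2 := by
  rw [trace_sCov_self]
  refine mul_le_mul_of_nonneg_left ?_ (by positivity)
  simp only [sq_evNorm, Pi.sub_apply]
  calc ∑ i, ∑ j, (r i j - sMean r j) ^ 2 = ∑ j, ∑ i, (r i j - sMean r j) ^ 2 := sum_comm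
    _ ≤ ∑ j, ∑ i, r i j ^ 2 := sum_le_sum fun j _ => by
      simpa [sMean, Finset.sum_apply] using sum_sq_sub_mean_le_sum_sq fun i => r i j
    _ = ∑ i, ∑ j, r i j ^ 2 := sum_comm

lemma sum_evNorm_sq_sub_sMean_le :
    ∑ i, evNorm (r i - sMean r) ^ 2 ≤ K * d * spNorm (sCov r r) := by
  obtain rfl | hK := K.eq_zero_or_pos
  · simp
  calc ∑ i, evNorm (r i - sMean r) ^ 2 = K * (sCov r r).trace := by
        rw [trace_sCov_self]
        field_simp
    _ ≤ K * (d * spNorm (sCov r r)) := by gcongr; exact trace_le_mul_spNorm _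
    _ = K * d * spNorm (sCov r r) := by ring

end SampleCovariance

lemma trace_sCov_le_of_evNorm_le {K du dr : ℕ} (u : Fin K → Fin du → ℝ)
    (r : Fin K → Fin dr → ℝ) (M : ℝ) (hr : ∀ i, evNorm (r i) ≤ M * evNorm (u i - sMean u) ^ 2) :
    (sCov r r).trace ≤ M ^ 2 * K * du ^ 2 * spNorm (sCov u u) ^ 2 := by
  set q : Fin K → ℝ := fun i => evNorm (u i - sMean u) ^ 2
  have hq_nonneg : ∀ i, 0 ≤ q i := fun _ => sq_nonneg _
  have hr_sq : ∀ i, evNorm (r i) ^ 2 ≤ M ^ 2 * q i ^ 2 := fun i => by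
    rw [← mul_pow]
    exact pow_le_pow_left₀ (Real.sqrt_nonneg _) (hr i) 2
  have hsum : ∑ i, evNorm (r i) ^ 2 ≤ M ^ 2 * (∑ i, q i) ^ 2 := calc
    _ ≤ ∑ i, M ^ 2 * q i ^ 2 := sum_le_sum fun i _ => hr_sq i
    _ = M ^ 2 * ∑ i, q i ^ 2 := (mul_sum _ _ _).symm
    _ ≤ M ^ 2 * (∑ i, q i) ^ 2 := by
      gcongr
      exact sum_sq_le_sq_sum_of_nonneg fun i _ => hq_nonneg i
  calc (sCov r r).trace ≤ (K : ℝ)⁻¹ * ∑ i, evNorm (r i) ^ 2 := trace_sCov_self_le_second_moment r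
    _ ≤ (K : ℝ)⁻¹ * (M ^ 2 * (K * du * spNorm (sCov u u)) ^ 2) := by
      gcongr
      refine hsum.trans ?_
      gcongr
      exact sum_evNorm_sq_sub_sMean_le u
    _ = M ^ 2 * K * du ^ 2 * spNorm (sCov u u) ^ 2 := by
      obtain rfl | hK := K.eq_zero_or_pos
      · simp
      field_simp

end

theorem residual_covariance_bound_general
    {du dy K : ℕ}
    (H : (Fin du → ℝ) → Fin (dy + du) → ℝ)
    (M₂ : ℝ)
    (hTay : ∀ x x',
      evNorm (H x' - H x - (jac H x).mulVec (x' - x)) ≤ M₂ * evNorm (x' - x) ^ 2)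
    (u : Fin K → Fin du → ℝ) :
    spNorm (sCov (fun i => H (u i) - H (sMean u) - (jac H (sMean u)).mulVec (u i - sMean u))
            (fun i => H (u i) - H (sMean u) - (jac H (sMean u)).mulVec (u i - sMean u))) ≤
      Matrix.trace
        (sCov (fun i => H (u i) - H (sMean u) - (jac H (sMean u)).mulVec (u i - sMean u))
          (fun i => H (u i) - H (sMean u) - (jac H (sMean u)).mulVec (u i - sMean u))) ∧
    Matrix.trace
        (sCov (fun i => H (u i) - H (sMean u) - (jac H (sMean u)).mulVec (u i - sMean u))
          (fun i => H (u i) - H (sMean u) - (jac H (sMean u)).mulVec (u i - sMean u))) ≤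
      M₂ ^ 2 * K * du ^ 2 * spNorm (sCov u u) ^ 2 :=
  ⟨spNorm_sCov_self_le_trace _, trace_sCov_le_of_evNorm_le u _ M₂ fun _ => hTay _ _⟩

/-- Lemma: bound on the sample covariance of the linearization residuals. -/
theorem residual_covariance_bound
    {du dy K : ℕ}
    (H : (Fin du → ℝ) → Fin (dy + du) → ℝ)
    (hdiff : Differentiable ℝ H)
    (M₂ : ℝ)
    (hTay : ∀ x x',
      evNorm (H x' - H x - (jac H x).mulVec (x' - x)) ≤ M₂ * evNorm (x' - x) ^ 2)
    (u : Fin K → Fin du → ℝ) :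
    spNorm (sCov (fun i => H (u i) - H (sMean u) - (jac H (sMean u)).mulVec (u i - sMean u))
            (fun i => H (u i) - H (sMean u) - (jac H (sMean u)).mulVec (u i - sMean u))) ≤
      Matrix.trace
        (sCov (fun i => H (u i) - H (sMean u) - (jac H (sMean u)).mulVec (u i - sMean u))
          (fun i => H (u i) - H (sMean u) - (jac H (sMean u)).mulVec (u i - sMean u))) ∧
    Matrix.trace
        (sCov (fun i => H (u i) - H (sMean u) - (jac H (sMean u)).mulVec (u i - sMean u))
          (fun i => H (u i) - H (sMean u) - (jac H (sMean u)).mulVec (u i - sMean u))) ≤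
      M₂ ^ 2 * K * du ^ 2 * spNorm (sCov u u) ^ 2 :=
  residual_covariance_bound_general H M₂ hTay u
end
end
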